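/- arXiv:1912.02375 — 2 statements merged into one kernel-verified Lean document; each statement's English description precedes it below -/
import Mathlib

section
/- Let r be a positive integer and let w be an integer with 0 ≤ w ≤ r. Then the graph I_{r−w} ∨ r^{r−w}·K_{w+1} (the join of the edgeless graph on r−w vertices with the disjoint union of r^{r−w} copies of the complete graph K_{w+1}) is not r-choosable. -/
open Filter

noncomputable section

/-- `G` has a nonempty subgraph of minimum degree at least `r`. -/
def HasSubMinDeg {V : Type} (G : SimpleGraph V) (r : ℕ) : Prop :=
  ∃ R : G.Subgraph, R.verts.Nonempty ∧ ∀ v ∈ R.verts, r ≤ (R.neighborSet v).ncard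

/-- `G` is `d`-degenerate: it has no subgraph of minimum degree at least `d+1`. -/
def IsDegen {V : Type} (G : SimpleGraph V) (d : ℕ) : Prop :=
  ¬ HasSubMinDeg G (d + 1)

/-- `G` has a nonempty `r`-regular subgraph. -/
def HasRegSub {V : Type} (G : SimpleGraph V) (r : ℕ) : Prop :=
  ∃ R : G.Subgraph, R.verts.Nonempty ∧ ∀ v ∈ R.verts, (R.neighborSet v).ncard = r

/-- `G` is `r`-choosable. -/
def Choosable {V : Type} (G : SimpleGraph V) (r : ℕ) : Prop :=
  ∀ L : V → Finset ℕ, (∀ v, r ≤ (L v).card) →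
    ∃ c : V → ℕ, (∀ v, c v ∈ L v) ∧ ∀ ⦃u w⦄, G.Adj u w → c u ≠ c w

/-- `H` is a minor of `G`: there are disjoint nonempty connected branch sets,
one for each vertex of `H`, with edges of `H` realized by edges of `G`. -/
def IsMinorOf {W V : Type} (H : SimpleGraph W) (G : SimpleGraph V) : Prop :=
  ∃ B : W → Set V,
    (∀ w, (B w).Nonempty) ∧
    (∀ ⦃w w'⦄, w ≠ w' → Disjoint (B w) (B w')) ∧
    (∀ w, (G.induce (B w)).Connected) ∧
    ∀ ⦃w w'⦄, H.Adj w w' → ∃ u ∈ B w, ∃ x ∈ B w', G.Adj u x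

/-- `G` contains a subgraph isomorphic to `H`. -/
def IsSubCopyOf {W V : Type} (H : SimpleGraph W) (G : SimpleGraph V) : Prop :=
  ∃ f : W ↪ V, ∀ ⦃a b⦄, H.Adj a b → G.Adj (f a) (f b)

/-- The join `G ∨ H` of two graphs. -/
def gJoin {V W : Type} (G : SimpleGraph V) (H : SimpleGraph W) : SimpleGraph (V ⊕ W) where
  Adj x y :=
    match x, y with
    | Sum.inl a, Sum.inl b => G.Adj a b
    | Sum.inr a, Sum.inr b => H.Adj a b
    | Sum.inl _, Sum.inr _ => True
    | Sum.inr _, Sum.inl _ => True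
  symm := by
    constructor
    rintro (a | a) (b | b) h
    · exact G.adj_symm h
    · trivial
    · trivial
    · exact H.adj_symm h
  loopless := by
    constructor
    rintro (a | a) h
    · exact G.irrefl h
    · exact H.irrefl h

/-- The disjoint union `tG` of `t` copies of `G`. -/
def gCopies {V : Type} (t : ℕ) (G : SimpleGraph V) : SimpleGraph (Fin t × V) where
  Adj x y := x.1 = y.1 ∧ G.Adj x.2 y.2
  symm := by
    constructor
    rintro x y ⟨h1, h2⟩
    exact ⟨h1.symm, h2.symm⟩
  loopless := by
    constructor
    rintro x ⟨-, h⟩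
    exact G.irrefl h

/-- The graph `G ∧_k Z`, obtained from `k` disjoint copies of `G` by identifying
the `k` copies of each vertex of `Z`. -/
def wedgePow {V : Type} (G : SimpleGraph V) (Z : Set V) (k : ℕ) :
    SimpleGraph (↥Z ⊕ (Fin k × ↥(Zᶜ : Set V))) where
  Adj x y :=
    match x, y with
    | Sum.inl z, Sum.inl z' => G.Adj z.1 z'.1
    | Sum.inl z, Sum.inr p => G.Adj z.1 p.2.1
    | Sum.inr p, Sum.inl z => G.Adj p.2.1 z.1
    | Sum.inr p, Sum.inr q => p.1 = q.1 ∧ G.Adj p.2.1 q.2.1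
  symm := by
    constructor
    rintro (z | p) (z' | q) h
    · exact h.symm
    · exact h.symm
    · exact h.symm
    · exact ⟨h.1.symm, h.2.symm⟩
  loopless := by
    constructor
    rintro (z | p) h
    · exact G.irrefl h
    · exact G.irrefl h.2

/-- `G` is (isomorphic to) the graph obtained from `W` by adding isolated vertices. -/
def ExtIsolated {VW V : Type} (W : SimpleGraph VW) (G : SimpleGraph V) : Prop :=
  ∃ f : VW ↪ V, (∀ a b, G.Adj (f a) (f b) ↔ W.Adj a b) ∧
    ∀ x y, G.Adj x y → ∃ a b, f a = x ∧ f b = y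

/-- Membership in the family `𝓕(G, F₀, r)`: `F` is obtained from the disjoint union of `G`
and `F₀` by adding edges between the two sides so that every vertex of `F₀` has degree
at least `r`. -/
def InFamF {V W : Type} (G : SimpleGraph V) (F0 : SimpleGraph W) (r : ℕ)
    (F : SimpleGraph (V ⊕ W)) : Prop :=
  (∀ a b, F.Adj (Sum.inl a) (Sum.inl b) ↔ G.Adj a b) ∧
  (∀ a b, F.Adj (Sum.inr a) (Sum.inr b) ↔ F0.Adj a b) ∧
  ∀ w : W, r ≤ (F.neighborSet (Sum.inr w)).ncard

/-- The type of `F ∈ 𝓕(G, F₀, r)`: the number of edges incident with the `F₀`-side. -/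
def typeOfF {V W : Type} (F : SimpleGraph (V ⊕ W)) : ℕ :=
  {e ∈ F.edgeSet | ∃ w : W, (Sum.inr w : V ⊕ W) ∈ e}.ncard

/-- The minimum size of a vertex cover of `H`. -/
def vcNum {V : Type} [Fintype V] (H : SimpleGraph V) : ℕ :=
  sInf {k | ∃ S : Finset V, S.card = k ∧ ∀ ⦃a b⦄, H.Adj a b → a ∈ S ∨ b ∈ S}

/-- `H` has minimum degree at least `r`. -/
def MinDegGE {V : Type} (H : SimpleGraph V) (r : ℕ) : Prop :=
  ∀ v, r ≤ (H.neighborSet v).ncard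

open Classical in
/-- The probability that the random subgraph `G(p)` (each edge kept independently with
probability `p`) satisfies the property `P`. -/
def edgeProb {n : ℕ} (G : SimpleGraph (Fin n)) (p : ℝ)
    (P : SimpleGraph (Fin n) → Prop) : ℝ :=
  ∑ S ∈ (Set.toFinite G.edgeSet).toFinset.powerset,
    if P (SimpleGraph.fromEdgeSet (S : Set (Sym2 (Fin n)))) then
      p ^ S.card * (1 - p) ^ ((Set.toFinite G.edgeSet).toFinset.card - S.card)
    else 0

/-- Condition (1) of the upper-threshold definition. -/
def CondOne (𝒢 : ∀ n : ℕ, Set (SimpleGraph (Fin n)))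
    (P : ∀ n : ℕ, SimpleGraph (Fin n) → Prop) (pstar : ℕ → ℝ) : Prop :=
  ∀ G : (n : ℕ) → SimpleGraph (Fin n), (∀ n, G n ∈ 𝒢 n) →
    ∀ q : ℕ → ℝ, (∀ n, q n ∈ Set.Icc (0 : ℝ) 1) →
      Tendsto (fun n => pstar n / q n) atTop atTop →
      Tendsto (fun n => edgeProb (G n) (q n) (P n)) atTop (nhds 1)

/-- Condition (2) of the upper-threshold definition. -/
def CondTwo (𝒢 : ∀ n : ℕ, Set (SimpleGraph (Fin n)))
    (P : ∀ n : ℕ, SimpleGraph (Fin n) → Prop) (pstar : ℕ → ℝ) : Prop :=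
  ∃ G : (n : ℕ) → SimpleGraph (Fin n), (∀ n, G n ∈ 𝒢 n) ∧
    ∀ q : ℕ → ℝ, (∀ n, q n ∈ Set.Icc (0 : ℝ) 1) →
      Tendsto (fun n => q n / pstar n) atTop atTop →
      Tendsto (fun n => edgeProb (G n) (q n) (P n)) atTop (nhds 0)

/-- `pstar` is an upper threshold for the class `𝒢` and the property `P`. -/
def IsUpperThreshold (𝒢 : ∀ n : ℕ, Set (SimpleGraph (Fin n)))
    (P : ∀ n : ℕ, SimpleGraph (Fin n) → Prop) (pstar : ℕ → ℝ) : Prop :=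
  CondOne 𝒢 P pstar ∧ CondTwo 𝒢 P pstar

/-- The class of `H`-minor-free graphs (on vertex sets `Fin n`). -/
def MClass {W : Type} (H : SimpleGraph W) (n : ℕ) : Set (SimpleGraph (Fin n)) :=
  {G | ¬ IsMinorOf H G}

/-- A `(c,q,r)`-good signature collection for `G`. -/
def GoodSig {V : Type} [Fintype V] (G : SimpleGraph V) (c : ℝ) (q r : ℕ)
    (C : Finset (Finset (Sym2 V))) : Prop :=
  (∀ S ∈ C, S.card = q ∧ (S : Set (Sym2 V)) ⊆ G.edgeSet) ∧
  (C.card : ℝ) ≤ c * (Fintype.card V : ℝ) ∧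
  ∀ R : G.Subgraph, R.verts.Nonempty → (∀ v ∈ R.verts, r ≤ (R.neighborSet v).ncard) →
    ∃ S ∈ C, (S : Set (Sym2 V)) ⊆ R.edgeSet

/-- The class `𝒢` has `(q,r)`-good signature collections. -/
def HasGoodSigs (𝒢 : ∀ n : ℕ, Set (SimpleGraph (Fin n))) (q r : ℕ) : Prop :=
  ∃ c : ℝ, ∀ n : ℕ, ∀ G ∈ 𝒢 n, ∃ C, GoodSig G c q r C

/-- The neighborhood `N_G(S)` of a set of vertices. -/
def setNbhd {V : Type} (G : SimpleGraph V) (S : Set V) : Set V :=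
  {v | v ∉ S ∧ ∃ u ∈ S, G.Adj u v}

/-- The average degree `2|E(G)|/|V(G)|` of a finite graph. -/
def avgDeg {V : Type} [Fintype V] (G : SimpleGraph V) : ℝ :=
  2 * (G.edgeSet.ncard : ℝ) / (Fintype.card V : ℝ)

/-- `N_{G[X]}^{≤ m}[x]`: the vertices reachable from `x` by a walk of length at most `m`
all of whose vertices lie in `X`. -/
def ballIn {V : Type} (G : SimpleGraph V) (X : Set V) (x : V) (m : ℤ) : Set V :=
  {y | ∃ w : G.Walk x y, (∀ z ∈ w.support, z ∈ X) ∧ (w.length : ℤ) ≤ m}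

/-- `G` contains a subgraph isomorphic to an `S`-subdivision of `H`, where `S` is the
set of allowed numbers of subdivisions per edge. -/
def ContainsSubdiv {VH V : Type} (G : SimpleGraph V) (H : SimpleGraph VH)
    (S : ℕ → Prop) : Prop :=
  ∃ (f : VH ↪ V) (P : ∀ ⦃a b⦄, H.Adj a b → G.Walk (f a) (f b)),
    (∀ ⦃a b⦄ (h : H.Adj a b), (P h).IsPath) ∧
    (∀ ⦃a b⦄ (h : H.Adj a b), 1 ≤ (P h).length ∧ S ((P h).length - 1)) ∧
    (∀ ⦃a b⦄ (h : H.Adj a b), ∀ c : VH, f c ∈ (P h).support → c = a ∨ c = b) ∧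
    ∀ ⦃a b a' b'⦄ (h : H.Adj a b) (h' : H.Adj a' b'), s(a, b) ≠ s(a', b') →
      ∀ x, x ∈ (P h).support → x ∈ (P h').support →
        (x = f a ∨ x = f b) ∧ (x = f a' ∨ x = f b')

/-- `H` is an `ℓ`-shallow minor of `G`: a minor all of whose branch sets have radius
at most `ℓ`. -/
def IsShallowMinorOf {W V : Type} (H : SimpleGraph W) (G : SimpleGraph V)
    (ℓ : WithTop ℤ) : Prop :=
  ∃ B : W → Set V,
    (∀ w, (B w).Nonempty) ∧
    (∀ ⦃w w'⦄, w ≠ w' → Disjoint (B w) (B w')) ∧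
    (∀ w, (G.induce (B w)).Connected) ∧
    (∀ w, ∃ v : B w, ∀ u : B w, (((G.induce (B w)).dist v u : ℤ) : WithTop ℤ) ≤ ℓ) ∧
    ∀ ⦃w w'⦄, H.Adj w w' → ∃ u ∈ B w, ∃ x ∈ B w', G.Adj u x

end

/-! Each independent vertex `i` gets a private palette `{i} × Fin r`; the cliques are indexed by
the ways `g : Fin t → Fin r` of choosing one color from every palette, and the clique indexed by
`g` gets the colors `(i, g i)` together with `w` extra colors. Whatever colors `g i` a coloring
gives the independent vertices, the clique indexed by `g` has only the `w` extra colors left. -/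

open Finset

theorem Choosable.exists_coloring {V C : Type} {G : SimpleGraph V} {r : ℕ}
    (hG : Choosable G r) (e : C ↪ ℕ) (L : V → Finset C) (hL : ∀ v, r ≤ (L v).card) :
    ∃ c : V → C, (∀ v, c v ∈ L v) ∧ ∀ ⦃u x⦄, G.Adj u x → c u ≠ c x := by
  obtain ⟨c, hcL, hc⟩ := hG (fun v => (L v).map e) (by simpa using hL)
  choose c' hc'L hc' using fun v => mem_map.1 (hcL v)
  exact ⟨c', hc'L, fun u x h heq => hc h (by rw [← hc' u, ← hc' x, heq])⟩

section BadLists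

variable (t r w : ℕ)

def badLists : Fin t ⊕ (Fin (r ^ t) × Fin (w + 1)) → Finset ((Fin t × Fin r) ⊕ Fin w)
  | Sum.inl i => univ.image fun j => Sum.inl (i, j)
  | Sum.inr (k, _) => (univ.image fun i => (i, finFunctionFinEquiv.symm k i)).disjSum univ

theorem le_card_badLists (h : r ≤ t + w) (v) : r ≤ (badLists t r w v).card := by
  rcases v with i | ⟨k, -⟩
  · rw [badLists, card_image_of_injective _ fun j j' hj => by simpa using hj]
    simp
  · rw [badLists, card_disjSum, card_image_of_injective _ fun i i' hi => (Prod.ext_iff.1 hi).1]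
    simpa using h

theorem not_exists_proper_coloring_badLists :
    ¬ ∃ c : Fin t ⊕ (Fin (r ^ t) × Fin (w + 1)) → (Fin t × Fin r) ⊕ Fin w,
      (∀ v, c v ∈ badLists t r w v) ∧
      ∀ ⦃u x⦄, (gJoin (⊥ : SimpleGraph (Fin t))
        (gCopies (r ^ t) (⊤ : SimpleGraph (Fin (w + 1))))).Adj u x → c u ≠ c x := by
  rintro ⟨c, hcL, hc⟩
  have hpick : ∀ i, ∃ j, Sum.inl (i, j) = c (Sum.inl i) := by
    intro i
    simpa [badLists] using hcL (Sum.inl i)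
  choose g hg using hpick
  set k := finFunctionFinEquiv g
  have hextra : ∀ v, ∃ e, Sum.inr e = c (Sum.inr (k, v)) := by
    intro v
    have hv := hcL (Sum.inr (k, v))
    simp only [badLists, k, Equiv.symm_apply_apply, mem_disjSum, mem_image, mem_univ,
      true_and] at hv
    rcases hv with ⟨-, ⟨i, rfl⟩, hi⟩ | ⟨e, he⟩
    · exact absurd (hg i ▸ hi) (hc (u := Sum.inl i) (x := Sum.inr (k, v)) trivial)
    · exact ⟨e, he⟩
  choose q hq using hextra
  have hq_inj : Function.Injective q := fun v v' h => by
    by_contra hne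
    exact hc (u := Sum.inr (k, v)) (x := Sum.inr (k, v')) ⟨rfl, hne⟩ (by rw [← hq, ← hq, h])
  simpa using Fintype.card_le_of_injective q hq_inj

end BadLists

theorem stmt_10_general (r : ℕ) (w : ℕ) :
    ¬ Choosable
        (gJoin (⊥ : SimpleGraph (Fin (r - w)))
          (gCopies (r ^ (r - w)) (⊤ : SimpleGraph (Fin (w + 1))))) r := fun hch =>
  not_exists_proper_coloring_badLists (r - w) r w <|
    hch.exists_coloring (Encodable.encode' _) _ (le_card_badLists _ _ _ (by omega))

/-- Lemma 3.3 (`I_{r-w} ∨ r^{r-w} K_{w+1}` is not `r`-choosable). -/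
theorem stmt_10 (r : ℕ) (hr : 0 < r) (w : ℕ) (hw : w ≤ r) :
    ¬ Choosable
        (gJoin (⊥ : SimpleGraph (Fin (r - w)))
          (gCopies (r ^ (r - w)) (⊤ : SimpleGraph (Fin (w + 1))))) r :=
  stmt_10_general r w
end

section
/- Let r be a positive integer and let H be a finite simple graph that is not a subgraph of K_r ∨ I_t for any positive integer t. Then for every integer s with s ≥ r, the complete bipartite graph K_{r,s} has no H-minor; that is, {K_{r,s} : s ≥ r} ⊆ M(H). -/
open Filter

/-
Choose in each branch set of an `H`-minor of `K_{r,s}` a vertex of the `r`-side whenever the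
branch set meets it. A branch set missing the `r`-side is a connected subset of the independent
`s`-side, hence a single vertex, so two such branch sets are never adjacent. The chosen vertices
are distinct, so they embed `H` into `K_r ∨ I_s`.
-/

namespace SimpleGraph

theorem IsIndepSet.exists_eq_singleton_of_connected_induce {V : Type*} {G : SimpleGraph V}
    {S : Set V} (hS : G.IsIndepSet S) (hc : (G.induce S).Connected) : ∃ x, S = {x} := by
  have hbot : G.induce S = ⊥ := by
    ext u v
    simp only [comap_adj, Function.Embedding.subtype_apply, bot_adj, iff_false]
    exact fun h => hS u.2 v.2 (G.ne_of_adj h) h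
  rw [hbot, connected_bot_iff] at hc
  obtain ⟨_, ⟨x⟩⟩ := hc
  exact ⟨x, Set.eq_singleton_iff_unique_mem.2
    ⟨x.2, fun y hy => congrArg Subtype.val (Subsingleton.elim ⟨y, hy⟩ x)⟩⟩

end SimpleGraph

open SimpleGraph

theorem IsSubCopyOf.gJoin_top_bot_mono {W α β γ : Type} {H : SimpleGraph W} (e : β ↪ γ)
    (h : IsSubCopyOf H (gJoin (⊤ : SimpleGraph α) (⊥ : SimpleGraph β))) :
    IsSubCopyOf H (gJoin (⊤ : SimpleGraph α) (⊥ : SimpleGraph γ)) := by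
  obtain ⟨f, hf⟩ := h
  refine ⟨f.trans ((Function.Embedding.refl α).sumMap e), fun a b hab => ?_⟩
  have hfab := hf hab
  show (gJoin ⊤ ⊥).Adj (Sum.map id e (f a)) (Sum.map id e (f b))
  generalize f a = x, f b = y at hfab ⊢
  rcases x with x | x <;> rcases y with y | y <;> simp_all [gJoin]

theorem gJoin_top_bot_adj_inl_of_ne {α β : Type} {a : α} {y : α ⊕ β} (h : Sum.inl a ≠ y) :
    (gJoin (⊤ : SimpleGraph α) (⊥ : SimpleGraph β)).Adj (Sum.inl a) y := by
  rcases y with a' | b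
  · exact fun h' => h (h' ▸ rfl)
  · trivial

theorem IsMinorOf.isSubCopyOf_gJoin_top_bot {W α β : Type} {H : SimpleGraph W}
    {G : SimpleGraph (α ⊕ β)} (hG : G.IsIndepSet (Set.range Sum.inr)) (hm : IsMinorOf H G) :
    IsSubCopyOf H (gJoin (⊤ : SimpleGraph α) (⊥ : SimpleGraph β)) := by
  obtain ⟨B, -, hdisj, hconn, hadj⟩ := hm
  have hrep : ∀ w, ∃ x ∈ B w, (∃ a, x = Sum.inl a) ∨ B w = {x} := by
    intro w
    by_cases hleft : ∃ a, Sum.inl a ∈ B w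
    · obtain ⟨a, ha⟩ := hleft
      exact ⟨_, ha, .inl ⟨a, rfl⟩⟩
    · have hright : B w ⊆ Set.range Sum.inr := by
        rintro (a | b) hx
        · exact absurd ⟨a, hx⟩ hleft
        · exact ⟨b, rfl⟩
      have hindep : G.IsIndepSet (B w) := hG.mono hright
      obtain ⟨x, hx⟩ := hindep.exists_eq_singleton_of_connected_induce (hconn w)
      exact ⟨x, hx ▸ rfl, .inr hx⟩
  choose f hfB hf using hrep
  have finj : Function.Injective f := fun w w' h => by
    by_contra hne
    exact (hdisj hne).ne_of_mem (hfB w) (hfB w') h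
  refine ⟨⟨f, finj⟩, fun w w' hww' => ?_⟩
  have hne : f w ≠ f w' := finj.ne hww'.ne
  show (gJoin ⊤ ⊥).Adj (f w) (f w')
  rcases hfw : f w with a | b
  · exact gJoin_top_bot_adj_inl_of_ne (hfw ▸ hne)
  rcases hfw' : f w' with a' | b'
  · rw [hfw, hfw'] at hne
    exact (gJoin_top_bot_adj_inl_of_ne hne.symm).symm
  have hw : B w = {f w} := (hf w).resolve_left (by simp [hfw])
  have hw' : B w' = {f w'} := (hf w').resolve_left (by simp [hfw'])
  obtain ⟨u, hu, x, hx, hux⟩ := hadj hww'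
  rw [hw, Set.mem_singleton_iff, hfw] at hu
  rw [hw', Set.mem_singleton_iff, hfw'] at hx
  subst hu hx
  exact absurd hux (hG ⟨b, rfl⟩ ⟨b', rfl⟩ (hfw ▸ hfw' ▸ hne))

theorem stmt_18_general (r : ℕ) {VH : Type} (H : SimpleGraph VH)
    (hH : ∀ t : ℕ, 0 < t →
      ¬ IsSubCopyOf H (gJoin (⊤ : SimpleGraph (Fin r)) (⊥ : SimpleGraph (Fin t)))) :
    ∀ s : ℕ, r ≤ s →
      ¬ IsMinorOf H (gJoin (⊥ : SimpleGraph (Fin r)) (⊥ : SimpleGraph (Fin s))) := by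
  intro s _ hm
  have hindep : (gJoin (⊥ : SimpleGraph (Fin r)) (⊥ : SimpleGraph (Fin s))).IsIndepSet
      (Set.range Sum.inr) := by
    rintro _ ⟨b, rfl⟩ _ ⟨b', rfl⟩ _
    exact id
  exact hH (s + 1) s.succ_pos
    ((hm.isSubCopyOf_gJoin_top_bot hindep).gJoin_top_bot_mono Fin.castSuccEmb)

/-- Lemma 6.1 (`K_{r,s}` is `H`-minor-free). -/
theorem stmt_18 (r : ℕ) (hr : 0 < r) {VH : Type} [Fintype VH] (H : SimpleGraph VH)
    (hH : ∀ t : ℕ, 0 < t →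
      ¬ IsSubCopyOf H (gJoin (⊤ : SimpleGraph (Fin r)) (⊥ : SimpleGraph (Fin t)))) :
    ∀ s : ℕ, r ≤ s →
      ¬ IsMinorOf H (gJoin (⊥ : SimpleGraph (Fin r)) (⊥ : SimpleGraph (Fin s))) :=
  stmt_18_general r H hH
end
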